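/- Let M = WH + N satisfy Assumption 2 (smooth separability) with ‖N(:,j)‖₁ ≤ ε for all j. Then there exists a feasible solution X of the convex SSNMF model with objective value ‖diag(X)‖₂² = r̃ = Σ_{t=1}^r 1/p_t; namely, the matrix X defined by X(i,:) = 0 for i ∉ S and X(i,:) = (1/p_t)H(t,:) for i ∈ S_t is feasible and satisfies X(j,j) = 1/p_t for all j ∈ S_t. -/
import Mathlib


open Finset Matrix

/-- `H` is entrywise nonnegative with columns summing to one. -/
def ColStochastic {r n : ℕ} (H : Matrix (Fin r) (Fin n) ℝ) : Prop :=
  (∀ k j, 0 ≤ H k j) ∧ ∀ j, ∑ k, H k j = 1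

/-- `X` is a feasible solution of the convex SSNMF model:
`‖M - MX‖₁ ≤ 2ε` and `0 ≤ X(i,j) ≤ X(i,i) ≤ 1` for all `i, j`. -/
def Feasible {m n : ℕ} (M : Matrix (Fin m) (Fin n) ℝ) (ε : ℝ)
    (X : Matrix (Fin n) (Fin n) ℝ) : Prop :=
  (∀ j, ∑ i, |M i j - (M * X) i j| ≤ 2 * ε) ∧
  ∀ i j, 0 ≤ X i j ∧ X i j ≤ X i i ∧ X i i ≤ 1

/-- The objective of the convex SSNMF model: `‖diag(X)‖₂² = ∑ᵢ X(i,i)²`. -/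
noncomputable def objVal {n : ℕ} (X : Matrix (Fin n) (Fin n) ℝ) : ℝ := ∑ i, (X i i) ^ 2

/-- Under smooth separability (Assumption 2), the matrix `X` defined by
`X(i,:) = 0` for `i ∉ S` and `X(i,:) = (1/p_t) H(t,:)` for `i ∈ S_t` is a feasible solution
of the convex SSNMF model, satisfies `X(j,j) = 1/p_t` for all `j ∈ S_t`, and has objective
value `‖diag(X)‖₂² = r̃ = ∑_t 1/p_t`. -/
theorem exists_feasible_with_objective_effective_rank {m n r : ℕ}
    (M N : Matrix (Fin m) (Fin n) ℝ) (W : Matrix (Fin m) (Fin r) ℝ)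
    (H : Matrix (Fin r) (Fin n) ℝ) (ε : ℝ)
    (S : Fin r → Finset (Fin n))
    (hε0 : 0 ≤ ε)
    (hM : M = W * H + N)
    (hH : ColStochastic H)
    (hN : ∀ j, ∑ i, |N i j| ≤ ε)
    (hSne : ∀ t, (S t).Nonempty)
    (hSH : ∀ t, ∀ j ∈ S t, ∀ k, H k j = if k = t then 1 else 0) :
    ∃ X : Matrix (Fin n) (Fin n) ℝ,
      Feasible M ε X ∧
      (∀ i, i ∉ Finset.univ.biUnion S → ∀ j, X i j = 0) ∧
      (∀ t, ∀ i ∈ S t, ∀ j, X i j = H t j / ((S t).card : ℝ)) ∧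
      (∀ t, ∀ j ∈ S t, X j j = 1 / ((S t).card : ℝ)) ∧
      objVal X = ∑ t, 1 / ((S t).card : ℝ) := by

  classical
  -- disjointness of the S t
  have hdisj : ∀ t t' : Fin r, t ≠ t' → ∀ i, i ∈ S t → i ∉ S t' := by
    intro t t' ht i hi hi'
    have h1 := hSH t i hi t
    have h2 := hSH t' i hi' t
    simp at h1
    rw [h1] at h2
    simp [ht] at h2
  have hcard : ∀ t, 0 < ((S t).card : ℝ) := fun t => by
    exact_mod_cast Finset.card_pos.mpr (hSne t)
  have hH1 : ∀ k j, H k j ≤ 1 := by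
    intro k j
    calc H k j ≤ ∑ s, H s j :=
          Finset.single_le_sum (fun s _ => hH.1 s j) (Finset.mem_univ k)
      _ = 1 := hH.2 j
  set X : Matrix (Fin n) (Fin n) ℝ :=
    fun i j => ∑ t, if i ∈ S t then H t j / ((S t).card : ℝ) else 0 with hXdef
  have hXmem : ∀ t, ∀ i ∈ S t, ∀ j, X i j = H t j / ((S t).card : ℝ) := by
    intro t i hi j
    show (∑ t', if i ∈ S t' then H t' j / ((S t').card : ℝ) else 0)
      = H t j / ((S t).card : ℝ)
    rw [Finset.sum_eq_single t]
    · simp [hi]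
    · intro t' _ ht'
      simp [hdisj t t' (Ne.symm ht') i hi]
    · intro h; exact absurd (Finset.mem_univ t) h
  have hXout : ∀ i, (∀ t, i ∉ S t) → ∀ j, X i j = 0 := by
    intro i hi j
    rw [hXdef]
    simp only
    exact Finset.sum_eq_zero (fun t _ => by simp [hi t])
  have hXdiag : ∀ t, ∀ j ∈ S t, X j j = 1 / ((S t).card : ℝ) := by
    intro t j hj
    rw [hXmem t j hj j, hSH t j hj t]
    simp
  -- key computation of the residual
  have hWH : ∀ t, ∀ k ∈ S t, ∀ i, (W * H) i k = W i t := by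
    intro t k hk i
    rw [Matrix.mul_apply]
    have : ∀ s, W i s * H s k = if s = t then W i t else 0 := by
      intro s
      rw [hSH t k hk s]
      by_cases h : s = t <;> simp [h]
    simp [this]
  have key : ∀ i j, M i j - (M * X) i j
      = N i j - ∑ t, (∑ k ∈ S t, N i k) * (H t j / ((S t).card : ℝ)) := by
    intro i j
    have hMX : (M * X) i j
        = ∑ t, (∑ k ∈ S t, M i k) * (H t j / ((S t).card : ℝ)) := by
      rw [Matrix.mul_apply]
      have : ∀ k, M i k * X k j
          = ∑ t, if k ∈ S t then M i k * (H t j / ((S t).card : ℝ)) else 0 := by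
        intro k
        rw [hXdef]
        simp only [Finset.mul_sum, mul_ite, mul_zero]
      rw [Finset.sum_congr rfl (fun k _ => this k), Finset.sum_comm]
      refine Finset.sum_congr rfl (fun t _ => ?_)
      rw [Finset.sum_ite_mem, Finset.univ_inter, Finset.sum_mul]
    have hsum : ∀ t, (∑ k ∈ S t, M i k)
        = ((S t).card : ℝ) * W i t + ∑ k ∈ S t, N i k := by
      intro t
      have : ∀ k ∈ S t, M i k = W i t + N i k := by
        intro k hk
        rw [hM]
        simp [hWH t k hk i]
      rw [Finset.sum_congr rfl this, Finset.sum_add_distrib, Finset.sum_const,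
        nsmul_eq_mul]
    have hMXfinal : (M * X) i j
        = (W * H) i j + ∑ t, (∑ k ∈ S t, N i k) * (H t j / ((S t).card : ℝ)) := by
      rw [hMX]
      have : ∀ t, (∑ k ∈ S t, M i k) * (H t j / ((S t).card : ℝ))
          = W i t * H t j + (∑ k ∈ S t, N i k) * (H t j / ((S t).card : ℝ)) := by
        intro t
        rw [hsum t, add_mul]
        congr 1
        have hc := (hcard t).ne'
        field_simp
      rw [Finset.sum_congr rfl (fun t _ => this t), Finset.sum_add_distrib,
        Matrix.mul_apply]
    rw [hMXfinal, hM]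
    simp [Matrix.add_apply]
  refine ⟨X, ⟨?_, ?_⟩, ?_, ?_, hXdiag, ?_⟩
  · -- residual bound
    intro j
    calc ∑ i, |M i j - (M * X) i j|
        ≤ ∑ i, (|N i j| + |∑ t, (∑ k ∈ S t, N i k) * (H t j / ((S t).card : ℝ))|) := by
          refine Finset.sum_le_sum (fun i _ => ?_)
          rw [key i j]
          exact abs_sub _ _
      _ = (∑ i, |N i j|)
          + ∑ i, |∑ t, (∑ k ∈ S t, N i k) * (H t j / ((S t).card : ℝ))| := by
          rw [Finset.sum_add_distrib]
      _ ≤ ε + ε := by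
          refine add_le_add (hN j) ?_
          calc ∑ i, |∑ t, (∑ k ∈ S t, N i k) * (H t j / ((S t).card : ℝ))|
              ≤ ∑ i, ∑ t, |∑ k ∈ S t, N i k| * (H t j / ((S t).card : ℝ)) := by
                refine Finset.sum_le_sum (fun i _ => ?_)
                refine (Finset.abs_sum_le_sum_abs _ _).trans ?_
                refine Finset.sum_le_sum (fun t _ => ?_)
                rw [abs_mul, abs_of_nonneg (div_nonneg (hH.1 t j) (hcard t).le)]
            _ = ∑ t, (H t j / ((S t).card : ℝ)) * ∑ i, |∑ k ∈ S t, N i k| := by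
                rw [Finset.sum_comm]
                refine Finset.sum_congr rfl (fun t _ => ?_)
                rw [Finset.mul_sum]
                exact Finset.sum_congr rfl (fun i _ => mul_comm _ _)
            _ ≤ ∑ t, (H t j / ((S t).card : ℝ)) * (((S t).card : ℝ) * ε) := by
                refine Finset.sum_le_sum (fun t _ => ?_)
                refine mul_le_mul_of_nonneg_left ?_
                  (div_nonneg (hH.1 t j) (hcard t).le)
                calc ∑ i, |∑ k ∈ S t, N i k|
                    ≤ ∑ i, ∑ k ∈ S t, |N i k| :=
                      Finset.sum_le_sum (fun i _ => Finset.abs_sum_le_sum_abs _ _)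
                  _ = ∑ k ∈ S t, ∑ i, |N i k| := Finset.sum_comm
                  _ ≤ ∑ k ∈ S t, ε := Finset.sum_le_sum (fun k _ => hN k)
                  _ = ((S t).card : ℝ) * ε := by
                      rw [Finset.sum_const, nsmul_eq_mul]
            _ = ∑ t, H t j * ε := by
                refine Finset.sum_congr rfl (fun t _ => ?_)
                have hc := (hcard t).ne'
                field_simp
            _ = ε := by rw [← Finset.sum_mul, hH.2 j, one_mul]
      _ = 2 * ε := by ring
  · -- box constraints
    intro i j
    by_cases hi : ∃ t, i ∈ S t
    · obtain ⟨t, ht⟩ := hi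
      rw [hXmem t i ht j, hXdiag t i ht]
      refine ⟨div_nonneg (hH.1 t j) (hcard t).le, ?_, ?_⟩
      · gcongr
        exact hH1 t j
      · rw [div_le_one (hcard t)]
        exact_mod_cast Finset.one_le_card.mpr (hSne t)
    · push_neg at hi
      rw [hXout i hi j, hXout i hi i]
      norm_num
  · intro i hi j
    refine hXout i (fun t ht => hi ?_) j
    exact Finset.mem_biUnion.mpr ⟨t, Finset.mem_univ t, ht⟩
  · exact hXmem
  · -- objective value
    unfold objVal
    have hzero : ∀ i ∈ Finset.univ \ Finset.univ.biUnion S, (X i i) ^ 2 = 0 := by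
      intro i hi
      rw [Finset.mem_sdiff, Finset.mem_biUnion] at hi
      push_neg at hi
      rw [hXout i (fun t => hi.2 t (Finset.mem_univ t)) i]
      ring
    rw [← Finset.sum_subset (Finset.subset_univ (Finset.univ.biUnion S))
      (fun i _ hi => by
        rw [Finset.mem_biUnion] at hi; push_neg at hi
        rw [hXout i (fun t => hi t (Finset.mem_univ t)) i]; ring)]
    rw [Finset.sum_biUnion]
    · refine Finset.sum_congr rfl (fun t _ => ?_)
      have : ∀ i ∈ S t, (X i i) ^ 2 = (1 / ((S t).card : ℝ)) ^ 2 := by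
        intro i hi; rw [hXdiag t i hi]
      rw [Finset.sum_congr rfl this, Finset.sum_const, nsmul_eq_mul]
      have hc := (hcard t).ne'
      field_simp
    · intro t _ t' _ htt'
      exact Finset.disjoint_left.mpr (fun i hi => hdisj t t' htt' i hi)
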